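/- arXiv:2310.17087 — 2 statements merged into one kernel-verified Lean document; each statement's English description precedes it below -/
import Mathlib

section
/- For every real parameter 0 < a ≤ 1, the degree of regularity of F_a equals a: there exist constants C₀, C₁ > 0 such that |F_a(s)| ≤ C₁|s|^a for all |s| ≥ C₀, and for every real n < a there are no constants C₀, C₁ > 0 with |F_a(s)| ≤ C₁|s|^n for all |s| ≥ C₀. -/
/-!
Since `log (e^t + 1)` lies between `t⁺` and `t⁺ + log 2`, the bracket
`log (e^{s-1} + 1) + log (e^{1-s} + 1)` lies between `|s - 1|` and `|s - 1| + 2 log 2`.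
Hence `F_a(s)` is squeezed between two constant multiples of `|s|^a` for large `|s|`,
while `|s|^a / |s|^n = |s|^(a-n)` is unbounded when `n < a`.
-/

/-- `F_a(s) = C_a (log(e^{s-1}+1) + log(e^{1-s}+1))^a` with
`C_a = 1/(a 2^{a-2} (log 2)^{a-1})`, for `0 < a ≤ 1`. -/
noncomputable def Fa (a : ℝ) (s : ℝ) : ℝ :=
  (1 / (a * (2 : ℝ) ^ (a - 2) * Real.log 2 ^ (a - 1))) *
    (Real.log (Real.exp (s - 1) + 1) + Real.log (Real.exp (1 - s) + 1)) ^ a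

open Real Filter

noncomputable def softplus (t : ℝ) : ℝ := log (exp t + 1)

lemma posPart_le_softplus (t : ℝ) : t⁺ ≤ softplus t :=
  max_le ((le_log_iff_exp_le (by positivity)).2 (by linarith))
    (log_nonneg (by linarith [exp_pos t]))

lemma softplus_le_posPart_add_log_two (t : ℝ) : softplus t ≤ t⁺ + log 2 := by
  rw [softplus, log_le_iff_le_exp (by positivity), exp_add, exp_log two_pos]
  have hexp : exp t ≤ exp t⁺ := exp_le_exp.2 (le_posPart t)
  have hone : 1 ≤ exp t⁺ := one_le_exp (posPart_nonneg t)
  linarith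

lemma abs_le_softplus_add_softplus_neg (t : ℝ) : |t| ≤ softplus t + softplus (-t) := by
  rw [← posPart_add_negPart, ← posPart_neg]
  exact add_le_add (posPart_le_softplus t) (posPart_le_softplus (-t))

lemma softplus_add_softplus_neg_le (t : ℝ) :
    softplus t + softplus (-t) ≤ |t| + 2 * log 2 := by
  rw [← posPart_add_negPart, ← posPart_neg]
  linarith [softplus_le_posPart_add_log_two t, softplus_le_posPart_add_log_two (-t)]

/-- `n` is a degree of regularity of `f`; `dor f` is the infimum of all such `n`. -/
def IsEventuallyBoundedByRpow (f : ℝ → ℝ) (n : ℝ) : Prop :=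
  ∃ C₀ C₁ : ℝ, 0 < C₀ ∧ 0 < C₁ ∧ ∀ s : ℝ, C₀ ≤ |s| → |f s| ≤ C₁ * |s| ^ n

lemma not_isEventuallyBoundedByRpow_of_le {f : ℝ → ℝ} {c a n : ℝ} (hc : 0 < c) (hn : n < a)
    (hf : ∀ᶠ s in atTop, c * s ^ a ≤ |f s|) : ¬ IsEventuallyBoundedByRpow f n := by
  rintro ⟨C₀, C₁, -, -, hbound⟩
  have hgrowth : ∀ᶠ s in atTop, C₁ / c < s ^ (a - n) :=
    (tendsto_rpow_atTop (sub_pos.2 hn)).eventually_gt_atTop _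
  obtain ⟨s, hlower, hsC₀, hspos, hgrow⟩ :=
    (hf.and ((eventually_ge_atTop C₀).and ((eventually_gt_atTop 0).and hgrowth))).exists
  have hupper := hbound s (by rwa [abs_of_pos hspos])
  rw [abs_of_pos hspos] at hupper
  have hsn : 0 < s ^ n := rpow_pos_of_pos hspos n
  have hlt : C₁ * s ^ n < c * s ^ a :=
    calc C₁ * s ^ n = c * (C₁ / c) * s ^ n := by field_simp
      _ < c * s ^ (a - n) * s ^ n := by gcongr
      _ = c * s ^ a := by rw [mul_assoc, ← rpow_add hspos, sub_add_cancel]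
  linarith

noncomputable def faCoeff (a : ℝ) : ℝ := 1 / (a * (2 : ℝ) ^ (a - 2) * log 2 ^ (a - 1))

lemma faCoeff_nonneg {a : ℝ} (ha : 0 ≤ a) : 0 ≤ faCoeff a := by
  unfold faCoeff
  positivity

lemma faCoeff_pos {a : ℝ} (ha : 0 < a) : 0 < faCoeff a := by
  unfold faCoeff
  positivity

lemma Fa_eq (a s : ℝ) : Fa a s = faCoeff a * (softplus (s - 1) + softplus (-(s - 1))) ^ a := by
  rw [neg_sub]
  rfl

lemma abs_Fa_le {a s : ℝ} (ha : 0 ≤ a) (hs : 3 ≤ |s|) : |Fa a s| ≤ faCoeff a * 2 ^ a * |s| ^ a := by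
  have hlower := abs_le_softplus_add_softplus_neg (s - 1)
  have hupper : softplus (s - 1) + softplus (-(s - 1)) ≤ 2 * |s| := by
    have habs : |s - 1| ≤ |s| + 1 := by simpa using abs_sub s 1
    linarith [softplus_add_softplus_neg_le (s - 1), log_two_lt_d9]
  have hnonneg := (abs_nonneg _).trans hlower
  rw [Fa_eq, abs_of_nonneg (mul_nonneg (faCoeff_nonneg ha) (rpow_nonneg hnonneg a)), mul_assoc,
    ← mul_rpow zero_le_two (abs_nonneg s)]
  gcongr
  exact faCoeff_nonneg ha

lemma le_Fa {a s : ℝ} (ha : 0 ≤ a) (hs : 2 ≤ s) : faCoeff a / 2 ^ a * s ^ a ≤ Fa a s := by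
  have hlower : s / 2 ≤ softplus (s - 1) + softplus (-(s - 1)) :=
    le_trans (by linarith [le_abs_self (s - 1)]) (abs_le_softplus_add_softplus_neg (s - 1))
  calc faCoeff a / 2 ^ a * s ^ a = faCoeff a * (s / 2) ^ a := by
        rw [div_rpow (by linarith) zero_le_two]
        ring
    _ ≤ Fa a s := by
        rw [Fa_eq]
        gcongr
        exact faCoeff_nonneg ha

lemma isEventuallyBoundedByRpow_Fa {a : ℝ} (ha : 0 ≤ a) : IsEventuallyBoundedByRpow (Fa a) a :=
  ⟨3, faCoeff a * 2 ^ a + 1, by norm_num, by positivity [faCoeff_nonneg ha],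
    fun s hs => (abs_Fa_le ha hs).trans (by gcongr; linarith)⟩

lemma not_isEventuallyBoundedByRpow_Fa {a n : ℝ} (ha : 0 < a) (hn : n < a) :
    ¬ IsEventuallyBoundedByRpow (Fa a) n := by
  refine not_isEventuallyBoundedByRpow_of_le (c := faCoeff a / 2 ^ a)
    (div_pos (faCoeff_pos ha) (by positivity)) hn ?_
  filter_upwards [eventually_ge_atTop 2] with s hs
  exact (le_Fa ha.le hs).trans (le_abs_self _)

theorem stmt_4_general (a : ℝ) (ha0 : 0 < a) :
    (∃ C₀ C₁ : ℝ, 0 < C₀ ∧ 0 < C₁ ∧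
      ∀ s : ℝ, C₀ ≤ |s| → |Fa a s| ≤ C₁ * |s| ^ a) ∧
    (∀ n : ℝ, n < a →
      ¬ ∃ C₀ C₁ : ℝ, 0 < C₀ ∧ 0 < C₁ ∧
        ∀ s : ℝ, C₀ ≤ |s| → |Fa a s| ≤ C₁ * |s| ^ n) :=
  ⟨isEventuallyBoundedByRpow_Fa ha0.le, fun _ hn => not_isEventuallyBoundedByRpow_Fa ha0 hn⟩

theorem stmt_4 (a : ℝ) (ha0 : 0 < a) (ha1 : a ≤ 1) :
    (∃ C₀ C₁ : ℝ, 0 < C₀ ∧ 0 < C₁ ∧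
      ∀ s : ℝ, C₀ ≤ |s| → |Fa a s| ≤ C₁ * |s| ^ a) ∧
    (∀ n : ℝ, n < a →
      ¬ ∃ C₀ C₁ : ℝ, 0 < C₀ ∧ 0 < C₁ ∧
        ∀ s : ℝ, C₀ ≤ |s| → |Fa a s| ≤ C₁ * |s| ^ n) :=
  stmt_4_general a ha0
end

section
/- (Two-step decrease of the norm.) Let 0 < a ≤ 1 and h > 0, and let (x_k, y_k) be gradient descent iterates on f_a with learning rate h. Suppose that at step k: −1 < r_k < 0, 0 < x_k y_k − 1 ≤ 1, and x_k² + y_k² ≤ 4/h. Then x_{k+2}² + y_{k+2}² ≤ x_k² + y_k² − 3.2 h (1 + r_k)(x_k y_k − 1). -/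
/-!
Write `δ = x_k y_k - 1`, `ρ = -r_k` and `N = x_k² + y_k²`. Since `G(u) = log(2 + 2 cosh u)`
(`softplusSum` below) lies in `[2 log 2, 2 log 2 + u²/4]` and
`F_a'(1 + u) = 2 (G(u) / (2 log 2))^(a-1) tanh(u/2)`, on `0 ≤ u ≤ 1` the derivative is pinched
between `u (1 - 0.27 u²)` and `u (1 - 3u²/40)`, and it is odd about `1`.
So `q_k ∈ [1 - 0.27 δ², 1]`, and the first step lands at `x y = 1 - ρδ`, where the gradient
factor is `-m` with `0 ≤ m ≤ M = ρδ (1 - 3(ρδ)²/40)`. The first step lowers `N` by at least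
`h q δ (4(1+δ)² - 4q²δ² - (1+ρ)δ(1+δ)) / (1+δ)`, increasing in `q`; the second raises it by at most
`4h (M(1 - ρδ) + M²)`. What is left is a polynomial inequality in `(δ, ρ) ∈ [0,1]²`.
-/

open Real

noncomputable def softplusSum (u : ℝ) : ℝ := log (exp u + 1) + log (exp (-u) + 1)

lemma softplusSum_eq (u : ℝ) : softplusSum u = 2 * log 2 + 2 * log (cosh (u / 2)) := by
  have hprod : (exp u + 1) * (exp (-u) + 1) = (2 * cosh (u / 2)) ^ 2 := by
    have h1 : exp (u / 2) * exp (-(u / 2)) = 1 := by rw [← exp_add]; simp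
    rw [cosh_eq, ← add_halves u, neg_add, exp_add, exp_add, add_halves]
    linear_combination (exp (u / 2) * exp (-(u / 2)) - 1) * h1
  rw [softplusSum, ← log_mul (by positivity) (by positivity), hprod, log_pow,
    log_mul two_ne_zero (cosh_pos _).ne']
  push_cast
  ring

lemma two_mul_log_two_le_softplusSum (u : ℝ) : 2 * log 2 ≤ softplusSum u := by
  rw [softplusSum_eq]
  linarith [log_nonneg (one_le_cosh (u / 2))]

lemma softplusSum_le (u : ℝ) : softplusSum u ≤ 2 * log 2 + u ^ 2 / 4 := by
  have h : log (cosh (u / 2)) ≤ (u / 2) ^ 2 / 2 :=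
    (log_le_log (cosh_pos _) (cosh_le_exp_half_sq _)).trans_eq (log_exp _)
  rw [softplusSum_eq]
  linarith

lemma softplusSum_pos (u : ℝ) : 0 < softplusSum u :=
  lt_of_lt_of_le (by positivity [log_pos one_lt_two]) (two_mul_log_two_le_softplusSum u)

lemma softplusSum_neg (u : ℝ) : softplusSum (-u) = softplusSum u := by
  simp only [softplusSum, neg_neg, add_comm]

lemma tanh_half_eq (u : ℝ) : tanh (u / 2) = (exp u - 1) / (exp u + 1) := by
  have h1 : exp (u / 2) * exp (-(u / 2)) = 1 := by rw [← exp_add]; simp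
  have h2 : exp u = exp (u / 2) * exp (u / 2) := by rw [← exp_add, add_halves]
  rw [tanh_eq, h2, div_eq_div_iff (by positivity) (by positivity)]
  linear_combination (-2 * exp (u / 2)) * h1

lemma hasDerivAt_softplusSum (u : ℝ) : HasDerivAt softplusSum (tanh (u / 2)) u := by
  have h1 : HasDerivAt (fun t => exp t + 1) (exp u) u := (hasDerivAt_exp u).add_const 1
  have h2 : HasDerivAt (fun t => exp (-t) + 1) (-exp (-u)) u := by
    simpa using ((hasDerivAt_neg u).exp).add_const 1
  have hsum : tanh (u / 2) = exp u / (exp u + 1) + -exp (-u) / (exp (-u) + 1) := by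
    rw [tanh_half_eq, exp_neg]
    field_simp
    ring
  rw [hsum]
  exact (h1.log (by positivity)).add (h2.log (by positivity))

lemma Fa_eq_s18 (a : ℝ) : Fa a = fun s =>
    1 / (a * 2 ^ (a - 2) * log 2 ^ (a - 1)) * softplusSum (s - 1) ^ a := by
  ext s
  rw [Fa, softplusSum, neg_sub]

lemma deriv_Fa_one_add {a : ℝ} (ha : a ≠ 0) (u : ℝ) :
    deriv (Fa a) (1 + u) = 2 * (softplusSum u / (2 * log 2)) ^ (a - 1) * tanh (u / 2) := by
  have hG : HasDerivAt (fun s => softplusSum (s - 1)) (tanh (u / 2)) (1 + u) :=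
    HasDerivAt.comp_sub_const (1 + u) 1
      (by rw [add_sub_cancel_left]; exact hasDerivAt_softplusSum u)
  rw [Fa_eq_s18, ((hG.rpow_const (Or.inl (softplusSum_pos _).ne')).const_mul _).deriv,
    add_sub_cancel_left, div_rpow (softplusSum_pos u).le (by positivity [log_pos one_lt_two]),
    mul_rpow zero_le_two (log_pos one_lt_two).le,
    show a - 1 = (a - 2) + 1 by ring, rpow_add_one two_ne_zero]
  have : 0 < log 2 ^ (a - 2 + 1) := rpow_pos_of_pos (log_pos one_lt_two) _
  field_simp

lemma deriv_Fa_one_sub {a : ℝ} (ha : a ≠ 0) (u : ℝ) :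
    deriv (Fa a) (1 - u) = -deriv (Fa a) (1 + u) := by
  rw [sub_eq_add_neg, deriv_Fa_one_add ha, deriv_Fa_one_add ha, softplusSum_neg, neg_div,
    tanh_neg]
  ring

lemma two_mul_tanh_half_le {u : ℝ} (hu0 : 0 ≤ u) (hu1 : u ≤ 1) :
    2 * tanh (u / 2) ≤ u - 3 / 40 * u ^ 3 := by
  have hexp :
      exp u ≤ 1 + u + u ^ 2 / 2 + u ^ 3 / 6 + u ^ 4 / 24 + u ^ 5 / 120 + 7 / 4320 * u ^ 6 := by
    have h := exp_bound' hu0 hu1 (show 0 < 6 by norm_num)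
    norm_num [Finset.sum_range_succ, Nat.factorial] at h
    linarith
  have h3 : 0 ≤ u ^ 3 := by positivity
  have hpoly : 0 ≤ 1/60*u^3 + 1/120*u^4 - 1/80*u^5 - 1/135*u^6 - 13/8640*u^7 - 1/1600*u^8
      - 7/57600*u^9 := by
    nlinarith [mul_nonneg h3 hu0, mul_nonneg (mul_nonneg h3 hu0) hu0, pow_le_one₀ hu0 hu1 (n := 2),
      mul_nonneg h3 (sub_nonneg.2 hu1), sq_nonneg (1 - u), mul_nonneg (mul_nonneg h3 h3) hu0,
      mul_nonneg h3 h3, pow_le_pow_of_le_one hu0 hu1 (show 5 ≤ 9 by norm_num),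
      pow_le_pow_of_le_one hu0 hu1 (show 5 ≤ 6 by norm_num),
      pow_le_pow_of_le_one hu0 hu1 (show 5 ≤ 7 by norm_num),
      pow_le_pow_of_le_one hu0 hu1 (show 5 ≤ 8 by norm_num)]
  have := mul_le_mul_of_nonneg_right hexp (show 0 ≤ 2 - (u - 3 / 40 * u ^ 3) by nlinarith)
  rw [tanh_half_eq, mul_div_assoc', div_le_iff₀ (by positivity)]
  nlinarith

lemma le_two_mul_tanh_half {u : ℝ} (hu0 : 0 ≤ u) (hu1 : u ≤ 1) :
    u * (1 - 27 / 100 * u ^ 2) * (1 + 181 / 1000 * u ^ 2) ≤ 2 * tanh (u / 2) := by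
  have hexp : 1 + u + u ^ 2 / 2 + u ^ 3 / 6 ≤ exp u := by
    have h := sum_le_exp_of_nonneg hu0 4
    norm_num [Finset.sum_range_succ, Nat.factorial] at h
    linarith
  have h3 : 0 ≤ u ^ 3 := by positivity
  have hpoly : 0 ≤ 17/1500*u^3 - 233/3000*u^4 + 889/6250*u^5 + 19111/300000*u^6
      + 4887/200000*u^7 + 1629/200000*u^8 := by
    nlinarith [mul_nonneg h3 (sq_nonneg (u - 3 / 10)),
      mul_nonneg (mul_nonneg h3 hu0) (sq_nonneg (u - 3 / 10)), mul_nonneg (mul_nonneg h3 hu0) hu0,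
      mul_nonneg h3 hu0, mul_nonneg (mul_nonneg h3 h3) hu0, mul_nonneg h3 h3]
  have := mul_le_mul_of_nonneg_right hexp
    (show 0 ≤ 2 - u * (1 - 27 / 100 * u ^ 2) * (1 + 181 / 1000 * u ^ 2) by
      nlinarith [pow_nonneg hu0 3, pow_nonneg hu0 5])
  rw [tanh_half_eq, mul_div_assoc', le_div_iff₀ (by positivity)]
  nlinarith

lemma tanh_half_nonneg {u : ℝ} (hu : 0 ≤ u) : 0 ≤ tanh (u / 2) := by
  rw [tanh_eq_sinh_div_cosh]
  exact div_nonneg (sinh_nonneg_iff.2 (by positivity)) (cosh_pos _).le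

lemma one_le_softplusSum_div (u : ℝ) : 1 ≤ softplusSum u / (2 * log 2) :=
  (one_le_div (by positivity [log_pos one_lt_two])).2 (two_mul_log_two_le_softplusSum u)

lemma deriv_Fa_one_add_le {a : ℝ} (ha0 : 0 < a) (ha1 : a ≤ 1) {u : ℝ} (hu0 : 0 ≤ u)
    (hu1 : u ≤ 1) : deriv (Fa a) (1 + u) ≤ u * (1 - 3 / 40 * u ^ 2) := by
  have hK : (softplusSum u / (2 * log 2)) ^ (a - 1) ≤ 1 :=
    rpow_le_one_of_one_le_of_nonpos (one_le_softplusSum_div u) (by linarith)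
  have hT := tanh_half_nonneg hu0
  rw [deriv_Fa_one_add ha0.ne']
  nlinarith [mul_le_mul_of_nonneg_right hK hT, two_mul_tanh_half_le hu0 hu1]

lemma le_deriv_Fa_one_add {a : ℝ} (ha0 : 0 < a) {u : ℝ} (hu0 : 0 ≤ u) (hu1 : u ≤ 1) :
    u * (1 - 27 / 100 * u ^ 2) ≤ deriv (Fa a) (1 + u) := by
  have hL : 0.6931471803 < log 2 := log_two_gt_d9
  have hG := softplusSum_pos u
  have hK : 2 * log 2 / softplusSum u ≤ (softplusSum u / (2 * log 2)) ^ (a - 1) := by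
    have h := rpow_le_rpow_of_exponent_le (one_le_softplusSum_div u)
      (show (-1 : ℝ) ≤ a - 1 by linarith)
    rwa [rpow_neg_one, inv_div] at h
  -- `softplusSum u ≤ 2 log 2 + u²/4` and `1 / (8 log 2) < 181/1000`
  have hratio : 1 ≤ 2 * log 2 / softplusSum u * (1 + 181 / 1000 * u ^ 2) := by
    rw [div_mul_eq_mul_div, one_le_div hG]
    nlinarith [softplusSum_le u, sq_nonneg u]
  have hc : 0 ≤ u * (1 - 27 / 100 * u ^ 2) := by nlinarith
  have hT := le_two_mul_tanh_half hu0 hu1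
  rw [deriv_Fa_one_add ha0.ne']
  calc u * (1 - 27 / 100 * u ^ 2)
      ≤ u * (1 - 27 / 100 * u ^ 2) * (2 * log 2 / softplusSum u * (1 + 181 / 1000 * u ^ 2)) :=
        le_mul_of_one_le_right hc hratio
    _ = 2 * log 2 / softplusSum u * (u * (1 - 27 / 100 * u ^ 2) * (1 + 181 / 1000 * u ^ 2)) := by
        ring
    _ ≤ 2 * log 2 / softplusSum u * (2 * tanh (u / 2)) := by gcongr
    _ ≤ (softplusSum u / (2 * log 2)) ^ (a - 1) * (2 * tanh (u / 2)) := by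
        have := tanh_half_nonneg hu0
        gcongr
    _ = _ := by ring

noncomputable def twoStepMargin (d r : ℝ) : ℝ :=
  4/5 - 4/5*r + 19/5*d - 9/5*d*r - 52/25*d^2 - d^2*r + 3/10*d^2*r^3
    - 189/100*d^3 + 27/100*d^3*r + 3/10*d^3*r^3 + 3/10*d^3*r^4
    + 243/100*d^4 + 27/100*d^4*r + 3/10*d^4*r^4 - 9/400*d^5*r^6
    - 2187/2500*d^6 - 9/400*d^6*r^6 + 19683/250000*d^8

set_option maxHeartbeats 400000 in
lemma twoStepMargin_nonneg {d r : ℝ} (hd0 : 0 ≤ d) (hd1 : d ≤ 1) (hr0 : 0 ≤ r) (hr1 : r ≤ 1) :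
    0 ≤ twoStepMargin d r := by
  have h1 := sq_nonneg (d ^ 2 - 1)
  have h2 := sq_nonneg (d - 1)
  have h3 := mul_nonneg hd0 (sub_nonneg.2 hd1)
  have h4 := sq_nonneg d
  have h5 := sq_nonneg (d ^ 3)
  have h6 := sq_nonneg (d ^ 4)
  have h7 := mul_nonneg (mul_nonneg hd0 hd0) (sub_nonneg.2 hd1)
  have h8 := sq_nonneg (d ^ 2 - d)
  have h9 := sq_nonneg (d ^ 3 - d)
  -- Bounding `r³, r⁴` below by the positive part of their tangents at `r = 1`, and `r⁶` above by
  -- `r`, leaves a lower bound that is piecewise linear in `r` with breakpoints `2/3, 3/4`; its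
  -- values at `r = 0, 2/3, 3/4, 1` are:
  have at_zero : 0 ≤ 4/5 + 19/5*d - 52/25*d^2 - 189/100*d^3 + 243/100*d^4 - 2187/2500*d^6
      + 19683/250000*d^8 := by nlinarith
  have at_two_thirds : 0 ≤ 4/15 + 13/5*d - 206/75*d^2 - 171/100*d^3 + 261/100*d^4 - 3/200*d^5
      - 4449/5000*d^6 + 19683/250000*d^8 := by nlinarith
  have at_three_quarters : 0 ≤ 1/5 + 49/20*d - 551/200*d^2 - 129/80*d^3 + 1053/400*d^4
      - 27/1600*d^5 - 35667/40000*d^6 + 19683/250000*d^8 := by nlinarith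
  have at_one : 0 ≤ 2*d - 139/50*d^2 - 51/50*d^3 + 3*d^4 - 9/400*d^5 - 8973/10000*d^6
      + 19683/250000*d^8 := by nlinarith [mul_nonneg hd0 hd0]
  have s1 : 0 ≤ (d^2 + d^3) * (r^3 - (3*r - 2)) :=
    mul_nonneg (by positivity) (by nlinarith [sq_nonneg (r - 1)])
  have s2 : 0 ≤ (d^3 + d^4) * (r^4 - (4*r - 3)) :=
    mul_nonneg (by positivity) (by nlinarith [sq_nonneg (r - 1), sq_nonneg r])
  have s3 : 0 ≤ (d^5 + d^6) * (r - r^6) :=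
    mul_nonneg (by positivity) (by nlinarith [pow_le_one₀ hr0 hr1 (n := 5), pow_nonneg hr0 5])
  have t1 : 0 ≤ (d^2 + d^3) * r^3 := by positivity
  have t2 : 0 ≤ (d^3 + d^4) * r^4 := by positivity
  unfold twoStepMargin
  rcases le_total r (2/3) with hr | hr
  · linarith [mul_nonneg (show (0:ℝ) ≤ 1 - 3/2*r by linarith) at_zero,
      mul_nonneg (show (0:ℝ) ≤ 3/2*r by linarith) at_two_thirds]
  rcases le_total r (3/4) with hr' | hr'
  · linarith [mul_nonneg (show (0:ℝ) ≤ 9 - 12*r by linarith) at_two_thirds,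
      mul_nonneg (show (0:ℝ) ≤ 12*r - 8 by linarith) at_three_quarters]
  · linarith [mul_nonneg (show (0:ℝ) ≤ 4 - 4*r by linarith) at_three_quarters,
      mul_nonneg (show (0:ℝ) ≤ 4*r - 3 by linarith) at_one]

def firstStepDrop (δ ρ q : ℝ) : ℝ :=
  q * δ * (4 * (1 + δ) ^ 2 - 4 * q ^ 2 * δ ^ 2 - (1 + ρ) * δ * (1 + δ))

lemma firstStepDrop_mono {δ ρ q₀ q : ℝ} (hδ0 : 0 ≤ δ) (hδ1 : δ ≤ 1) (hρ : ρ ≤ 1)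
    (hq₀ : 0 ≤ q₀) (hq₀q : q₀ ≤ q) (hq : q ≤ 1) :
    firstStepDrop δ ρ q₀ ≤ firstStepDrop δ ρ q := by
  have hsum : q ^ 2 + q * q₀ + q₀ ^ 2 ≤ 3 := by nlinarith
  have hbracket :
      0 ≤ 4 * (1 + δ) ^ 2 - (1 + ρ) * δ * (1 + δ) - 4 * δ ^ 2 * (q ^ 2 + q * q₀ + q₀ ^ 2) := by
    nlinarith [mul_le_mul_of_nonneg_left hsum (sq_nonneg δ),
      mul_nonneg (mul_nonneg (sub_nonneg.2 hρ) hδ0) (show (0:ℝ) ≤ 1 + δ by linarith)]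
  have hdiff : firstStepDrop δ ρ q - firstStepDrop δ ρ q₀ = δ * (q - q₀) *
      (4 * (1 + δ) ^ 2 - (1 + ρ) * δ * (1 + δ) - 4 * δ ^ 2 * (q ^ 2 + q * q₀ + q₀ ^ 2)) := by
    unfold firstStepDrop; ring
  nlinarith [mul_nonneg (mul_nonneg hδ0 (sub_nonneg.2 hq₀q)) hbracket]

lemma budget_le_firstStepDrop {δ ρ M : ℝ} (hδ0 : 0 ≤ δ) (hδ1 : δ ≤ 1) (hρ0 : 0 ≤ ρ)
    (hρ1 : ρ ≤ 1) (hM : M = ρ * δ * (1 - 3 / 40 * (ρ * δ) ^ 2)) :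
    16 / 5 * (1 - ρ) * δ * (1 + δ) + 4 * (M * (1 - ρ * δ) + M ^ 2) * (1 + δ) ≤
      firstStepDrop δ ρ (1 - 27 / 100 * δ ^ 2) := by
  have h : firstStepDrop δ ρ (1 - 27 / 100 * δ ^ 2) -
      (16 / 5 * (1 - ρ) * δ * (1 + δ) + 4 * (M * (1 - ρ * δ) + M ^ 2) * (1 + δ)) =
      δ * twoStepMargin δ ρ := by
    rw [hM]; unfold firstStepDrop twoStepMargin; ring
  nlinarith [mul_nonneg hδ0 (twoStepMargin_nonneg hδ0 hδ1 hρ0 hρ1)]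

lemma first_step_drop {δ ρ q h N N₁ : ℝ} (hδ : 0 < δ) (hq0 : 0 < q) (hh : 0 < h)
    (hN : 2 * (1 + δ) ≤ N) (hhN : h * N ≤ 4)
    (hrel : h * q * (N - h * (q * δ) * (1 + δ)) = 1 + ρ)
    (hN₁ : N₁ = N - 4 * h * (q * δ) * (1 + δ) + h ^ 2 * (q * δ) ^ 2 * N) :
    h * firstStepDrop δ ρ q ≤ (N - N₁) * (1 + δ) := by
  have hid : (N - N₁) * (1 + δ) = h * firstStepDrop δ ρ q +
      h * (q * δ) * (4 * q ^ 2 * δ ^ 2 - (h * (q * δ)) ^ 2 * (1 + δ) ^ 2) := by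
    rw [hN₁]; unfold firstStepDrop
    linear_combination (-(h * (q * δ)) * (1 + δ) * δ) * hrel
  -- `h (1 + δ) ≤ h N / 2 ≤ 2`
  have htδ : h * (q * δ) * (1 + δ) ≤ 2 * (q * δ) := by
    have : h * (1 + δ) ≤ 2 := by nlinarith
    nlinarith [mul_le_mul_of_nonneg_left this (show 0 ≤ q * δ by positivity)]
  have hrest : 0 ≤ 4 * q ^ 2 * δ ^ 2 - (h * (q * δ)) ^ 2 * (1 + δ) ^ 2 := by
    nlinarith [mul_nonneg (sub_nonneg.2 htδ)
      (show 0 ≤ 2 * (q * δ) + h * (q * δ) * (1 + δ) by positivity)]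
  nlinarith [mul_nonneg (show 0 ≤ h * (q * δ) by positivity) hrest]

lemma second_step_rise {h m M s N₁ : ℝ} (hh : 0 ≤ h) (hm0 : 0 ≤ m) (hmM : m ≤ M) (hs : 0 ≤ s)
    (hhN₁ : h * N₁ ≤ 4) :
    4 * h * m * s + h ^ 2 * m ^ 2 * N₁ ≤ 4 * h * (M * s + M ^ 2) := by
  have h1 : h ^ 2 * m ^ 2 * N₁ ≤ 4 * h * m ^ 2 := by
    nlinarith [mul_le_mul_of_nonneg_left hhN₁ (show 0 ≤ h * m ^ 2 by positivity)]
  have h2 : m * s + m ^ 2 ≤ M * s + M ^ 2 := by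
    nlinarith [mul_le_mul_of_nonneg_right hmM hs]
  nlinarith [mul_le_mul_of_nonneg_left h2 (show 0 ≤ 4 * h by positivity)]

lemma two_step_le {δ ρ q m h N N₁ : ℝ} (hδ0 : 0 < δ) (hδ1 : δ ≤ 1) (hρ0 : 0 < ρ) (hρ1 : ρ < 1)
    (hq0 : 1 - 27 / 100 * δ ^ 2 ≤ q) (hq1 : q ≤ 1)
    (hm0 : 0 ≤ m) (hm1 : m ≤ ρ * δ * (1 - 3 / 40 * (ρ * δ) ^ 2))
    (hh : 0 < h) (hN : 2 * (1 + δ) ≤ N) (hhN : h * N ≤ 4)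
    (hrel : h * q * (N - h * (q * δ) * (1 + δ)) = 1 + ρ)
    (hN₁ : N₁ = N - 4 * h * (q * δ) * (1 + δ) + h ^ 2 * (q * δ) ^ 2 * N) :
    N₁ + 4 * h * m * (1 - ρ * δ) + h ^ 2 * m ^ 2 * N₁ ≤ N - 16 / 5 * h * (1 - ρ) * δ := by
  set M := ρ * δ * (1 - 3 / 40 * (ρ * δ) ^ 2) with hM
  have hq₀ : 0 < 1 - 27 / 100 * δ ^ 2 := by nlinarith
  have hdrop := (mul_le_mul_of_nonneg_left ((budget_le_firstStepDrop hδ0.le hδ1 hρ0.le hρ1.le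
    hM).trans (firstStepDrop_mono hδ0.le hδ1 hρ1.le hq₀.le hq0 hq1)) hh.le).trans
    (first_step_drop hδ0 (hq₀.trans_le hq0) hh hN hhN hrel hN₁)
  have hρδ : ρ * δ ≤ 1 := by nlinarith
  have hM0 : 0 ≤ M * (1 - ρ * δ) + M ^ 2 := by
    have : 0 ≤ M := mul_nonneg (by positivity) (by nlinarith [mul_pos hρ0 hδ0])
    have : 0 ≤ 1 - ρ * δ := by linarith
    positivity
  have hN₁N : N₁ ≤ N := by
    nlinarith [mul_nonneg hh.le (mul_nonneg hM0 (show 0 ≤ 1 + δ by linarith)),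
      mul_nonneg hh.le (mul_nonneg (mul_nonneg (sub_nonneg.2 hρ1.le) hδ0.le)
        (show 0 ≤ 1 + δ by linarith))]
  have hrise := second_step_rise hh.le hm0 hm1 (s := 1 - ρ * δ) (by linarith)
    (show h * N₁ ≤ 4 by nlinarith)
  refine le_of_mul_le_mul_right ?_ (show 0 < 1 + δ by linarith)
  nlinarith [mul_le_mul_of_nonneg_right hrise (show 0 ≤ 1 + δ by linarith)]

lemma deriv_Fa_one_add_div_mem {a δ : ℝ} (ha0 : 0 < a) (ha1 : a ≤ 1) (hδ0 : 0 < δ)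
    (hδ1 : δ ≤ 1) :
    1 - 27 / 100 * δ ^ 2 ≤ deriv (Fa a) (1 + δ) / δ ∧ deriv (Fa a) (1 + δ) / δ ≤ 1 := by
  rw [le_div_iff₀ hδ0, div_le_one hδ0]
  constructor
  · linarith [le_deriv_Fa_one_add ha0 hδ0.le hδ1]
  · nlinarith [deriv_Fa_one_add_le ha0 ha1 hδ0.le hδ1, pow_pos hδ0 3]

/-- Two-step decrease of the squared norm along GD for `f_a`, when
`-1 < r_k < 0`, `0 < x_k y_k - 1 ≤ 1` and `x_k² + y_k² ≤ 4/h`. -/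
theorem stmt_18 (a : ℝ) (ha0 : 0 < a) (ha1 : a ≤ 1) (h : ℝ) (hh : 0 < h)
    (x y : ℕ → ℝ)
    (hGD : ∀ n, x (n + 1) = x n - h * deriv (Fa a) (x n * y n) * y n ∧
                y (n + 1) = y n - h * deriv (Fa a) (x n * y n) * x n)
    (k : ℕ) (ℓk qk rk : ℝ)
    (hℓ : ℓk = deriv (Fa a) (x k * y k))
    (hq : qk = ℓk / (x k * y k - 1))
    (hr : rk = 1 - h * qk * ((x k ^ 2 + y k ^ 2) - h * ℓk * (x k * y k)))
    (hr1 : -1 < rk) (hr2 : rk < 0)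
    (hδ1 : 0 < x k * y k - 1) (hδ2 : x k * y k - 1 ≤ 1)
    (hnorm : x k ^ 2 + y k ^ 2 ≤ 4 / h) :
    x (k + 2) ^ 2 + y (k + 2) ^ 2 ≤
      x k ^ 2 + y k ^ 2 - 3.2 * h * (1 + rk) * (x k * y k - 1) := by
  obtain ⟨hx₁, hy₁⟩ := hGD k
  obtain ⟨hx₂, hy₂⟩ := hGD (k + 1)
  set δ := x k * y k - 1
  have hxy : x k * y k = 1 + δ := by ring
  have hℓq : ℓk = qk * δ := by rw [hq]; field_simp
  obtain ⟨hq_lo, hq_hi⟩ := deriv_Fa_one_add_div_mem ha0 ha1 hδ1 hδ2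
  rw [← hxy, ← hℓ, ← hq] at hq_lo hq_hi
  have hxy₁ : x (k + 1) * y (k + 1) = 1 - -rk * δ := by
    rw [hx₁, hy₁, ← hℓ, hr, hℓq]; ring
  have hρδ : 0 < -rk * δ := mul_pos (by linarith) hδ1
  have hρδ1 : -rk * δ ≤ 1 := by nlinarith
  have hm0 : 0 ≤ deriv (Fa a) (1 + -rk * δ) := by
    nlinarith [le_deriv_Fa_one_add ha0 hρδ.le hρδ1]
  have hℓ₁ : deriv (Fa a) (x (k + 1) * y (k + 1)) = -deriv (Fa a) (1 + -rk * δ) := by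
    rw [hxy₁, deriv_Fa_one_sub ha0.ne']
  have hbound := two_step_le hδ1 hδ2 (neg_pos.2 hr2) (by linarith) hq_lo hq_hi hm0
    (deriv_Fa_one_add_le ha0 ha1 hρδ.le hρδ1) hh
    (show 2 * (1 + δ) ≤ x k ^ 2 + y k ^ 2 by nlinarith [sq_nonneg (x k - y k)])
    (by rwa [le_div_iff₀ hh, mul_comm] at hnorm) (by rw [hr, hℓq, hxy]; ring) rfl
  have hN₂ : x (k + 2) ^ 2 + y (k + 2) ^ 2 = x (k + 1) ^ 2 + y (k + 1) ^ 2 +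
      4 * h * deriv (Fa a) (1 + -rk * δ) * (1 - -rk * δ) +
      h ^ 2 * deriv (Fa a) (1 + -rk * δ) ^ 2 * (x (k + 1) ^ 2 + y (k + 1) ^ 2) := by
    rw [hx₂, hy₂, hℓ₁, ← hxy₁]; ring
  have hN₁ : x (k + 1) ^ 2 + y (k + 1) ^ 2 = x k ^ 2 + y k ^ 2 -
      4 * h * (qk * δ) * (1 + δ) + h ^ 2 * (qk * δ) ^ 2 * (x k ^ 2 + y k ^ 2) := by
    rw [hx₁, hy₁, ← hℓ, hℓq, ← hxy]; ring
  rw [hN₂, hN₁, show (3.2 : ℝ) = 16 / 5 by norm_num]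
  linarith
end
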